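/- For every integer n with 0 ≤ n ≤ l−1, the quotient A-module (x^n·B)/Δ(I^n) is, as an abelian group, free of rank (l−n)(l−n−1)/2. In particular, the cokernel of Δ : A → B is a free abelian group of rank l(l−1)/2. -/

import Mathlib

open MvPolynomial

set_option maxHeartbeats 800000
set_option synthInstance.maxHeartbeats 200000

noncomputable section

/-- `A = ℤ[x,y]/(x^l − y^l)`, with `x = X 0`, `y = X 1`. -/
def IA (l : ℕ) : Ideal (MvPolynomial (Fin 2) ℤ) := Ideal.span {X 0 ^ l - X 1 ^ l}

/-- `B = ℤ[x,t]/(t^l − 1)`, with `x = X 0`, `t = X 1`. -/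
def IB (l : ℕ) : Ideal (MvPolynomial (Fin 2) ℤ) := Ideal.span {X 1 ^ l - 1}

abbrev Aq (l : ℕ) := MvPolynomial (Fin 2) ℤ ⧸ IA l
abbrev Bq (l : ℕ) := MvPolynomial (Fin 2) ℤ ⧸ IB l

/-- The class of `x` in `A`. -/
def xA (l : ℕ) : Aq l := Ideal.Quotient.mk (IA l) (X 0)
/-- The class of `y` in `A`. -/
def yA (l : ℕ) : Aq l := Ideal.Quotient.mk (IA l) (X 1)
/-- The class of `x` in `B`. -/
def xB (l : ℕ) : Bq l := Ideal.Quotient.mk (IB l) (X 0)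
/-- The class of `t` in `B`. -/
def tB (l : ℕ) : Bq l := Ideal.Quotient.mk (IB l) (X 1)

lemma tB_pow (l : ℕ) : tB l ^ l = 1 := by
  have h : (X 1 ^ l - 1 : MvPolynomial (Fin 2) ℤ) ∈ IB l := Ideal.subset_span rfl
  have h2 : Ideal.Quotient.mk (IB l) (X 1 ^ l - 1) = 0 :=
    Ideal.Quotient.eq_zero_iff_mem.mpr h
  have h3 : tB l ^ l - 1 = 0 := by
    rw [tB, ← map_pow, ← map_one (Ideal.Quotient.mk (IB l)), ← map_sub]
    simpa using h2
  exact sub_eq_zero.mp h3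

/-- The diagonal ring homomorphism `Δ : A → B`, determined by `x ↦ x`, `y ↦ t·x`. -/
def Δmap (l : ℕ) : Aq l →+* Bq l :=
  Ideal.Quotient.lift (IA l) ((aeval ![xB l, tB l * xB l]).toRingHom)
    (by
      intro p hp
      obtain ⟨c, rfl⟩ := Ideal.mem_span_singleton'.mp hp
      have key : (aeval ![xB l, tB l * xB l]) (X 0 ^ l - X 1 ^ l : MvPolynomial (Fin 2) ℤ) = 0 := by
        simp [mul_pow, tB_pow l]
      simp only [AlgHom.toRingHom_eq_coe, RingHom.coe_coe, map_mul, key, mul_zero])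

lemma Δmap_xA (l : ℕ) : Δmap l (xA l) = xB l := by
  simp [Δmap, xA]

lemma Δmap_yA (l : ℕ) : Δmap l (yA l) = tB l * xB l := by
  simp [Δmap, yA]

/-- The ideal `I = (x, y) ⊆ A`. -/
def Iid (l : ℕ) : Ideal (Aq l) := Ideal.span {xA l, yA l}

/-- The subgroup `x^n·B = {x^n·b : b ∈ B}` of `B`, as an additive subgroup. -/
def xnBadd (l n : ℕ) : AddSubgroup (Bq l) := (AddMonoidHom.mulLeft (xB l ^ n)).range

/-- The image `Δ(I^n) ⊆ B`, as an additive subgroup. -/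
def ΔInadd (l n : ℕ) : AddSubgroup (Bq l) :=
  AddSubgroup.map (Δmap l).toAddMonoidHom (Iid l ^ n : Ideal (Aq l)).toAddSubgroup

/-!
`B` is the monoid ring `ℤ[ℕ × ℤ/l]`, so it is a free abelian group on the monomials `x^i t^j`
(`i ∈ ℕ`, `j ∈ ℤ/l`). In this basis `x^n·B` is spanned by the monomials with `n ≤ i`. Since
`Δ(x^a y^b) = x^(a+b) t^b` and `I^n` is spanned by the monomials of degree at least `n`, `Δ(I^n)`
is spanned by the monomials with `n ≤ i` and `j ≤ i`, where `j` is read in `[0, l)`. So the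
quotient is free on the monomials with `n ≤ i < j`, and there are
`∑_{j<l} (j - n) = (l-n)(l-n-1)/2` of them.
-/

open AddMonoidAlgebra

theorem AddMonoidAlgebra.of'_dvd_iff_forall_mem_support {k G : Type*} [Semiring k]
    [AddCommMonoid G] [IsCancelAdd G] {x : k[G]} {g : G} :
    of' k G g ∣ x ↔ ∀ g' ∈ x.coeff.support, ∃ d, g' = g + d := by
  rw [of'_dvd_iff_modOf_eq_zero]
  constructor
  · intro h g' hg'
    by_contra hg
    rw [Finsupp.mem_support_iff, ← coeff_modOf_of_not_exists_add x g g' hg, h] at hg'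
    exact hg' rfl
  · intro h
    ext g'
    by_cases hg : ∃ d, g' = g + d
    · simp [coeff_modOf_of_exists_add x g g' hg]
    · simpa [coeff_modOf_of_not_exists_add x g g' hg] using mt (h g') hg

theorem Finset.sum_range_tsub_eq_sum_range (l n : ℕ) :
    ∑ v ∈ range l, (v - n) = ∑ k ∈ range (l - n), k := by
  induction l with
  | zero => simp
  | succ l ih =>
    rw [sum_range_succ, ih]
    rcases le_or_gt n l with h | h
    · rw [Nat.sub_add_comm h, sum_range_succ]
    · simp [Nat.sub_eq_zero_of_le h.le, Nat.sub_eq_zero_of_le h]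

section FreeQuotient
variable {α M : Type*} [AddCommGroup M] (e : M ≃+ (α →₀ ℤ)) (D : Finset α)

def restrictCoeffs : M →+ (D → ℤ) :=
  AddMonoidHom.mk' (fun b d => e b d) fun a b => by ext; simp

variable {e D} {S T : Set α}

lemma restrictCoeffs_eq_zero_iff (hD : ∀ p, p ∈ D ↔ p ∈ T \ S) {b : M}
    (hb : ↑(e b).support ⊆ T) : restrictCoeffs e D b = 0 ↔ ↑(e b).support ⊆ S := by
  constructor
  · intro h p hp
    by_contra hS
    exact Finsupp.mem_support_iff.mp hp (congrFun h ⟨p, (hD p).2 ⟨hb hp, hS⟩⟩)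
  · intro h
    ext d
    by_contra hd
    exact ((hD d).1 d.2).2 (h (Finsupp.mem_support_iff.mpr hd))

lemma exists_restrictCoeffs_eq (v : D → ℤ) :
    ∃ b, ↑(e b).support ⊆ (D : Set α) ∧ restrictCoeffs e D b = v := by
  refine ⟨e.symm (Finsupp.embDomain (.subtype _) (Finsupp.equivFunOnFinite.symm v : D →₀ ℤ)),
    ?_, ?_⟩
  · simp [Finsupp.support_embDomain]
  · ext d
    simpa [restrictCoeffs] using
      Finsupp.embDomain_apply_self (.subtype (· ∈ D)) (Finsupp.equivFunOnFinite.symm v) d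

theorem nonempty_quotient_addSubgroupOf_addEquiv (hD : ∀ p, p ∈ D ↔ p ∈ T \ S)
    {H K : AddSubgroup M} (hK : ∀ b, b ∈ K ↔ ↑(e b).support ⊆ T)
    (hH : ∀ b, b ∈ H ↔ ↑(e b).support ⊆ S) :
    Nonempty (K ⧸ H.addSubgroupOf K ≃+ (Fin D.card → ℤ)) := by
  let ψ := (restrictCoeffs e D).comp K.subtype
  have hker : ψ.ker = H.addSubgroupOf K := by
    ext ⟨b, hb⟩
    simp [ψ, AddSubgroup.mem_addSubgroupOf, restrictCoeffs_eq_zero_iff hD ((hK b).1 hb), hH]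
  have hsurj : Function.Surjective ψ := fun v => by
    obtain ⟨b, hbD, rfl⟩ := exists_restrictCoeffs_eq (e := e) v
    exact ⟨⟨b, (hK b).2 fun p hp => ((hD p).1 (hbD hp)).1⟩, rfl⟩
  exact ⟨(QuotientAddGroup.quotientAddEquivOfEq hker.symm).trans <|
    (QuotientAddGroup.quotientKerEquivOfSurjective ψ hsurj).trans <|
      AddEquiv.arrowCongr D.equivFin (.refl ℤ)⟩

theorem nonempty_quotient_addEquiv (hD : ∀ p, p ∈ D ↔ p ∉ S) {H : AddSubgroup M}
    (hH : ∀ b, b ∈ H ↔ ↑(e b).support ⊆ S) :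
    Nonempty (M ⧸ H ≃+ (Fin D.card → ℤ)) := by
  have hD' : ∀ p, p ∈ D ↔ p ∈ Set.univ \ S := by simpa using hD
  have hker : (restrictCoeffs e D).ker = H := by
    ext b
    simp [restrictCoeffs_eq_zero_iff hD' (Set.subset_univ _), hH]
  have hsurj : Function.Surjective (restrictCoeffs e D) := fun v => by
    obtain ⟨b, -, hb⟩ := exists_restrictCoeffs_eq (e := e) v
    exact ⟨b, hb⟩
  exact ⟨(QuotientAddGroup.quotientAddEquivOfEq hker.symm).trans <|
    (QuotientAddGroup.quotientKerEquivOfSurjective _ hsurj).trans <|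
      AddEquiv.arrowCongr D.equivFin (.refl ℤ)⟩

end FreeQuotient

section MonomialBasis
variable (l : ℕ)

lemma tB_pow_eq_pow_mod (m : ℕ) : tB l ^ m = tB l ^ (m % l) :=
  pow_eq_pow_mod m (tB_pow l)

def toAddMonoidAlgebra : Bq l →+* ℤ[ℕ × ZMod l] :=
  Ideal.Quotient.lift (IB l) (aeval ![single (1, 0) 1, single (0, 1) 1]).toRingHom <| by
    intro p hp
    obtain ⟨c, rfl⟩ := Ideal.mem_span_singleton'.mp hp
    simp [single_pow, ← Prod.zero_eq_mk, ← AddMonoidAlgebra.one_def]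

lemma toAddMonoidAlgebra_xB_pow_mul_tB_pow (i j : ℕ) :
    toAddMonoidAlgebra l (xB l ^ i * tB l ^ j) = single (i, (j : ZMod l)) 1 := by
  simp [toAddMonoidAlgebra, xB, tB, single_pow, single_mul_single]

variable [NeZero l]

def monomialHom : Multiplicative (ℕ × ZMod l) →* Bq l where
  toFun p := xB l ^ p.toAdd.1 * tB l ^ p.toAdd.2.val
  map_one' := by simp
  map_mul' p q := by
    simp only [toAdd_mul, Prod.fst_add, Prod.snd_add, ZMod.val_add, ← tB_pow_eq_pow_mod]
    ring

def ofAddMonoidAlgebra : ℤ[ℕ × ZMod l] →+* Bq l :=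
  (AddMonoidAlgebra.lift ℤ (Bq l) (ℕ × ZMod l) (monomialHom l)).toRingHom

lemma ofAddMonoidAlgebra_single (p : ℕ × ZMod l) (c : ℤ) :
    ofAddMonoidAlgebra l (single p c) = c • (xB l ^ p.1 * tB l ^ p.2.val) :=
  lift_single _ _ _

lemma ofAddMonoidAlgebra_toAddMonoidAlgebra (i j : ℕ) :
    ofAddMonoidAlgebra l (toAddMonoidAlgebra l (xB l ^ i * tB l ^ j)) = xB l ^ i * tB l ^ j := by
  rw [toAddMonoidAlgebra_xB_pow_mul_tB_pow, ofAddMonoidAlgebra_single, one_smul, ZMod.val_natCast,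
    ← tB_pow_eq_pow_mod]

def addMonoidAlgebraEquiv : Bq l ≃+* ℤ[ℕ × ZMod l] := by
  refine .ofRingHom (toAddMonoidAlgebra l) (ofAddMonoidAlgebra l)
    (ringHom_ext' (RingHom.ext_int _ _) <| MonoidHom.ext fun p => ?_)
    (Ideal.Quotient.ringHom_ext <| MvPolynomial.ringHom_ext
      (fun r => by simp [eq_intCast C r]) fun i => ?_)
  · simp [ofAddMonoidAlgebra_single, toAddMonoidAlgebra_xB_pow_mul_tB_pow]
  · fin_cases i
    · simpa [xB, tB] using ofAddMonoidAlgebra_toAddMonoidAlgebra l 1 0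
    · simpa [xB, tB] using ofAddMonoidAlgebra_toAddMonoidAlgebra l 0 1

lemma addMonoidAlgebraEquiv_apply (b : Bq l) :
    addMonoidAlgebraEquiv l b = toAddMonoidAlgebra l b := rfl

end MonomialBasis

section Diagonal
variable (l : ℕ)

/-- The exponent map of `Δ` on monomials: `x^a y^b ↦ x^(a+b) t^b`. -/
def diagExponent : (Fin 2 →₀ ℕ) →+ ℕ × ZMod l :=
  Finsupp.degree.prod ((Nat.castAddMonoidHom (ZMod l)).comp (Finsupp.applyAddHom 1))

lemma toAddMonoidAlgebra_Δmap_mk (q : MvPolynomial (Fin 2) ℤ) :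
    toAddMonoidAlgebra l (Δmap l (Ideal.Quotient.mk (IA l) q)) =
      mapDomainRingHom ℤ (diagExponent l) q := by
  suffices h : ((toAddMonoidAlgebra l).comp (Δmap l)).comp (Ideal.Quotient.mk (IA l)) =
      mapDomainRingHom ℤ (diagExponent l) from RingHom.congr_fun h q
  refine MvPolynomial.ringHom_ext (fun r => by simp [eq_intCast C r]) fun i => ?_
  fin_cases i
  · change toAddMonoidAlgebra l (Δmap l (xA l)) = _
    simpa [Δmap_xA, X, MvPolynomial.monomial, diagExponent] using
      toAddMonoidAlgebra_xB_pow_mul_tB_pow l 1 0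
  · change toAddMonoidAlgebra l (Δmap l (yA l)) = _
    simpa [Δmap_yA, X, MvPolynomial.monomial, diagExponent, mul_comm] using
      toAddMonoidAlgebra_xB_pow_mul_tB_pow l 1 1

lemma Iid_pow_eq_map (n : ℕ) :
    Iid l ^ n = (MvPolynomial.idealOfVars (Fin 2) ℤ ^ n).map (Ideal.Quotient.mk (IA l)) := by
  rw [Ideal.map_pow, Ideal.map_span, Iid]
  congr
  ext
  simp [Fin.exists_fin_two, xA, yA, eq_comm]

lemma xB_pow_mul_tB_pow_mem_ΔInadd {n i j : ℕ} (hn : n ≤ i) (hj : j ≤ i) :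
    xB l ^ i * tB l ^ j ∈ ΔInadd l n := by
  have hmem : xA l ^ (i - j) * yA l ^ j ∈ Iid l ^ n := by
    refine Ideal.pow_le_pow_right (show n ≤ i - j + j by omega) ?_
    rw [pow_add (Iid l)]
    exact Ideal.mul_mem_mul (Ideal.pow_mem_pow (Ideal.subset_span (by simp)) _)
      (Ideal.pow_mem_pow (Ideal.subset_span (by simp)) _)
  refine ⟨_, hmem, ?_⟩
  simp only [RingHom.toAddMonoidHom_eq_coe, AddMonoidHom.coe_coe, map_mul, map_pow, Δmap_xA,
    Δmap_yA]
  rw [mul_pow, mul_left_comm, ← pow_add, Nat.sub_add_cancel hj, mul_comm]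

end Diagonal

section Membership
variable (l : ℕ) [NeZero l]

def monomialCoeffs : Bq l ≃+ (ℕ × ZMod l →₀ ℤ) :=
  (addMonoidAlgebraEquiv l).toAddEquiv.trans coeffAddEquiv

lemma monomialCoeffs_apply (b : Bq l) :
    monomialCoeffs l b = (toAddMonoidAlgebra l b).coeff := rfl

lemma monomialCoeffs_symm_single (p : ℕ × ZMod l) (c : ℤ) :
    (monomialCoeffs l).symm (Finsupp.single p c) = c • (xB l ^ p.1 * tB l ^ p.2.val) :=
  ofAddMonoidAlgebra_single l p c

lemma mem_xnBadd_iff (n : ℕ) (b : Bq l) :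
    b ∈ xnBadd l n ↔ ↑(monomialCoeffs l b).support ⊆ {p : ℕ × ZMod l | n ≤ p.1} := by
  have hxn : addMonoidAlgebraEquiv l (xB l ^ n) = of' ℤ _ (n, 0) := by
    simpa [addMonoidAlgebraEquiv_apply] using toAddMonoidAlgebra_xB_pow_mul_tB_pow l n 0
  have hmem : b ∈ xnBadd l n ↔ xB l ^ n ∣ b := by
    simp [xnBadd, dvd_def, eq_comm]
  rw [hmem, ← map_dvd_iff (addMonoidAlgebraEquiv l), hxn, of'_dvd_iff_forall_mem_support]
  refine forall₂_congr fun p _ => ⟨?_, fun h => ⟨(p.1 - n, p.2), ?_⟩⟩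
  · rintro ⟨d, rfl⟩
    exact Nat.le_add_right n d.1
  · ext <;> simp [Nat.add_sub_cancel' (show n ≤ p.1 from h)]

lemma mem_ΔInadd_iff (n : ℕ) (b : Bq l) :
    b ∈ ΔInadd l n ↔
      ↑(monomialCoeffs l b).support ⊆ {p : ℕ × ZMod l | n ≤ p.1 ∧ p.2.val ≤ p.1} := by
  constructor
  · rintro ⟨a, ha, rfl⟩ p hp
    obtain ⟨q, hq, rfl⟩ := (Ideal.mem_map_iff_of_surjective _ Ideal.Quotient.mk_surjective).mp
      (Iid_pow_eq_map l n ▸ ha)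
    rw [MvPolynomial.mem_pow_idealOfVars_iff] at hq
    simp only [RingHom.toAddMonoidHom_eq_coe, AddMonoidHom.coe_coe, monomialCoeffs_apply,
      toAddMonoidAlgebra_Δmap_mk] at hp
    obtain ⟨d, hd, rfl⟩ := Finset.mem_image.mp (Finsupp.mapDomain_support hp)
    have hd1 : d 1 ≤ d.degree := Finsupp.le_degree 1 d
    exact ⟨hq d hd, by simpa [diagExponent, ZMod.val_natCast] using (Nat.mod_le _ l).trans hd1⟩
  · intro h
    rw [← (monomialCoeffs l).symm_apply_apply b, ← Finsupp.sum_single (monomialCoeffs l b),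
      Finsupp.sum, map_sum]
    refine sum_mem fun p hp => ?_
    rw [monomialCoeffs_symm_single]
    obtain ⟨hn, hj⟩ := h hp
    exact zsmul_mem (xB_pow_mul_tB_pow_mem_ΔInadd l hn hj) _

end Membership

section Count
variable (l : ℕ) [NeZero l]

/-- The exponents `(i, j)` of the monomials `x^i t^j` that give a basis of the quotient. -/
def gapExponents (n : ℕ) : Finset (ℕ × ZMod l) :=
  (Finset.range l ×ˢ Finset.univ).filter fun p => n ≤ p.1 ∧ p.1 < p.2.val

lemma mem_gapExponents_iff (n : ℕ) (p : ℕ × ZMod l) :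
    p ∈ gapExponents l n ↔
      p ∈ {p : ℕ × ZMod l | n ≤ p.1} \ {p : ℕ × ZMod l | n ≤ p.1 ∧ p.2.val ≤ p.1} := by
  have := ZMod.val_lt p.2
  simp only [gapExponents, Finset.mem_filter, Finset.mem_product, Finset.mem_range,
    Finset.mem_univ, and_true, Set.mem_sdiff, Set.mem_ofPred_eq]
  omega

lemma card_gapExponents (n : ℕ) : (gapExponents l n).card = (l - n) * (l - n - 1) / 2 := by
  have hfib : ∀ j : ZMod l,
      ((Finset.range l).filter fun i => n ≤ i ∧ i < j.val) = Finset.Ico n j.val := by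
    intro j
    ext i
    have := ZMod.val_lt j
    simp only [Finset.mem_filter, Finset.mem_range, Finset.mem_Ico]
    omega
  have hsum : ∑ j : ZMod l, (j.val - n) = ∑ v ∈ Finset.range l, (v - n) := by
    obtain ⟨k, rfl⟩ : ∃ k, l = k + 1 := Nat.exists_eq_succ_of_ne_zero (NeZero.ne l)
    exact Fin.sum_univ_eq_sum_range (fun v => v - n) (k + 1)
  rw [gapExponents, Finset.card_filter, Finset.sum_product_right]
  simp only [← Finset.card_filter, hfib, Nat.card_Ico, hsum, Finset.sum_range_tsub_eq_sum_range,
    Finset.sum_range_id]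

end Count

/-- For `0 ≤ n ≤ l−1`, the quotient `(x^n·B)/Δ(I^n)` is, as an abelian group, free of rank
`(l−n)(l−n−1)/2`.  In particular (`n = 0`) the cokernel of `Δ : A → B` is a free abelian
group of rank `l(l−1)/2`. -/
theorem stmt_3 (l : ℕ) (hl : 1 ≤ l) :
    (∀ n : ℕ, n ≤ l - 1 →
      Nonempty ((xnBadd l n ⧸ (ΔInadd l n).addSubgroupOf (xnBadd l n)) ≃+
        (Fin ((l - n) * (l - n - 1) / 2) → ℤ))) ∧
    Nonempty ((Bq l ⧸ (Δmap l).toAddMonoidHom.range) ≃+ (Fin (l * (l - 1) / 2) → ℤ)) := by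
  have : NeZero l := ⟨by omega⟩
  refine ⟨fun n _ => ?_, ?_⟩
  · rw [← card_gapExponents]
    exact nonempty_quotient_addSubgroupOf_addEquiv (mem_gapExponents_iff l n)
      (mem_xnBadd_iff l n) (mem_ΔInadd_iff l n)
  · have hrange : (Δmap l).toAddMonoidHom.range = ΔInadd l 0 := by
      simp [ΔInadd, AddMonoidHom.range_eq_map]
    rw [hrange, ← Nat.sub_zero l, ← card_gapExponents]
    refine nonempty_quotient_addEquiv (fun p => ?_) (mem_ΔInadd_iff l 0)
    simpa using mem_gapExponents_iff l 0 p
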